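/- Let F(θ,q,g,t,ξ) ∈ GL(K_F) be defined for θ, t, ξ ∈ ℝ, q ∈ SU(2), g ∈ SU(3) as below. Then: (i) F is a group homomorphism from ℝ × SU(2) × SU(3) × ℝ × ℝ (with componentwise operations) to GL(K_F); (ii) the three families S := {F(θ,q,g,0,−θ/3)}, T := {F(0,1,1,t,−t/3)}, X := {F(0,1,1,0,ξ)} are subgroups of GL(K_F) whose elements pairwise commute; (iii) every F(θ,q,g,t,ξ) factors as F(θ,q,g,t,ξ) = F(θ,q,g,0,−θ/3)·F(0,1,1,t,−t/3)·F(0,1,1,0,ξ+(θ+t)/3). In particular the extended gauge group is generated by the unimodular gauge group, the U(1)_{B−L} subgroup and the U(1)_X subgroup. -/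
import Mathlib


open Matrix Complex
open scoped BigOperators

noncomputable section

/-- Index set of the internal space `K₀ = (ℂ² ⊕ ℂ²⊗ℂ³) ⊗ ℂ^N`. -/
abbrev I0 (N : ℕ) := (Fin 2 ⊕ Fin 2 × Fin 3) × Fin N

/-- Index set of `K_F = K₀ ⊗ ℂ⁴`, the `Fin 4` factor labelling the sectors
`R = 0, L = 1, R̄ = 2, L̄ = 3`. -/
abbrev IF (N : ℕ) := Fin 4 × I0 N

/-- Endomorphisms of `K₀`. -/
abbrev Op0 (N : ℕ) := Matrix (I0 N) (I0 N) ℂ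

/-- Endomorphisms of `K_F`. -/
abbrev OpF (N : ℕ) := Matrix (IF N) (IF N) ℂ

/-- Build an operator on `K_F` from a `4×4` matrix of blocks in `End(K₀)`. -/
def mk4 {N : ℕ} (B : Matrix (Fin 4) (Fin 4) (Op0 N)) : OpF N :=
  fun p q => B p.1 q.1 p.2 q.2

/-- Build an operator on `K₀` from a lepton block and a quark block (each a matrix of
generation matrices). -/
def op0 {N : ℕ} (fl : Fin 2 → Fin 2 → Matrix (Fin N) (Fin N) ℂ)
    (fq : Fin 2 × Fin 3 → Fin 2 × Fin 3 → Matrix (Fin N) (Fin N) ℂ) : Op0 N :=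
  fun p q =>
    match p.1, q.1 with
    | Sum.inl i, Sum.inl i' => fl i i' p.2 q.2
    | Sum.inr j, Sum.inr j' => fq j j' p.2 q.2
    | _, _ => 0

/-- `q` is a quaternion, i.e. of the form `[[α, β], [−β̄, ᾱ]]`. -/
def IsQuat (q : Matrix (Fin 2) (Fin 2) ℂ) : Prop :=
  q 1 1 = star (q 0 0) ∧ q 1 0 = -star (q 0 1)

/-- `ã = (a ⊕ a⊗1₃)⊗1_N` for `a ∈ M₂(ℂ)`. -/
def tild {N : ℕ} (a : Matrix (Fin 2) (Fin 2) ℂ) : Op0 N :=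
  op0 (fun i i' => a i i' • 1)
    (fun j j' => if j.2 = j'.2 then a j.1 j'.1 • 1 else 0)

/-- `Y₀ = diag(Y_ν, Y_e) ⊕ diag(1₃⊗Y_u, 1₃⊗Y_d)`. -/
def Y0 {N : ℕ} (Yν Ye Yu Yd : Matrix (Fin N) (Fin N) ℂ) : Op0 N :=
  op0 (fun i i' => if i = i' then (if i = 0 then Yν else Ye) else 0)
    (fun j j' => if j = j' then (if j.1 = 0 then Yu else Yd) else 0)

/-- `M₀ = p_ν ⊗ m₀ ⊕ 0`. -/
def M0 {N : ℕ} (m0 : Matrix (Fin N) (Fin N) ℂ) : Op0 N :=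
  op0 (fun i i' => if i = 0 ∧ i' = 0 then m0 else 0) (fun _ _ => 0)

/-- The finite Dirac operator `D_F`. -/
def DF {N : ℕ} (s : ℂ) (Yν Ye Yu Yd m0 : Matrix (Fin N) (Fin N) ℂ) : OpF N :=
  mk4 !![0, -(Y0 Yν Ye Yu Yd)ᴴ, s • (M0 m0)ᴴ, 0;
         Y0 Yν Ye Yu Yd, 0, 0, 0;
         M0 m0, 0, 0, -(Y0 Yν Ye Yu Yd)ᵀ;
         0, 0, (Y0 Yν Ye Yu Yd).map (starRingEnd ℂ), 0]

/-- The bimodule `Ω¹_F` of standard-model finite 1-forms. -/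
def Omega1F {N : ℕ} (Yν Ye Yu Yd : Matrix (Fin N) (Fin N) ℂ) : Set (OpF N) :=
  {w | ∃ q1 q2 : Matrix (Fin 2) (Fin 2) ℂ, IsQuat q1 ∧ IsQuat q2 ∧
    w = mk4 !![0, (Y0 Yν Ye Yu Yd)ᴴ * tild q1, 0, 0;
               tild q2 * Y0 Yν Ye Yu Yd, 0, 0, 0;
               0, 0, 0, 0;
               0, 0, 0, 0]}

/-- The bimodule `Ω¹_σ`. -/
def Omega1σ {N : ℕ} (m0 : Matrix (Fin N) (Fin N) ℂ) : Set (OpF N) :=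
  {w | ∃ z1 z2 : ℂ,
    w = mk4 !![0, 0, z2 • (M0 m0)ᴴ, 0;
               0, 0, 0, 0;
               z1 • M0 m0, 0, 0, 0;
               0, 0, 0, 0]}

/-- `q_λ = diag(λ, λ̄)`. -/
def qmat (l : ℂ) : Matrix (Fin 2) (Fin 2) ℂ := !![l, 0; 0, star l]

/-- Block acting as `μ·1` on the lepton sector and as `1₂⊗m⊗1_N` on the quark sector. -/
def lsqc {N : ℕ} (μ : ℂ) (m : Matrix (Fin 3) (Fin 3) ℂ) : Op0 N :=
  op0 (fun i i' => if i = i' then μ • 1 else 0)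
    (fun j j' => if j.1 = j'.1 then m j.2 j'.2 • 1 else 0)

/-- The extended representation `π(λ,q,m,μ)` of `A_F^ext = ℂ⊕ℍ⊕M₃(ℂ)⊕ℂ` on `K_F`. -/
def rep {N : ℕ} (l : ℂ) (q : Matrix (Fin 2) (Fin 2) ℂ)
    (m : Matrix (Fin 3) (Fin 3) ℂ) (μ : ℂ) : OpF N :=
  mk4 !![tild (qmat l), 0, 0, 0;
         0, tild q, 0, 0;
         0, 0, lsqc μ m, 0;
         0, 0, 0, lsqc μ m]

/-- The image of the opposite representation of `A_F^ext` (the algebra `B`). -/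
def Bop {N : ℕ} (l μ : ℂ) (q : Matrix (Fin 2) (Fin 2) ℂ)
    (m : Matrix (Fin 3) (Fin 3) ℂ) : OpF N :=
  mk4 !![lsqc μ m, 0, 0, 0;
         0, lsqc μ m, 0, 0;
         0, 0, tild (qmat l), 0;
         0, 0, 0, tild q]

end

noncomputable section

/-- The `R`-sector block `A(θ,t,ξ,g)` of the gauge transformation. -/
def Ablk {N : ℕ} (θ t ξ : ℝ) (g : Matrix (Fin 3) (Fin 3) ℂ) : Op0 N :=
  op0
    (fun i i' => if i = i' then
      (if i = 0 then Complex.exp (-(t : ℂ) * I)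
        else Complex.exp (-((t : ℂ) + 2 * (θ : ℂ)) * I)) • 1 else 0)
    (fun j j' => if j.1 = j'.1 then
      ((if j.1 = 0 then Complex.exp (((θ : ℂ) - (ξ : ℂ)) * I)
        else Complex.exp (-((θ : ℂ) + (ξ : ℂ)) * I)) * star (g j.2 j'.2)) • 1 else 0)

/-- The `L`-sector block `B(θ,t,ξ,q,g)` of the gauge transformation. -/
def Bblk {N : ℕ} (θ t ξ : ℝ) (q : Matrix (Fin 2) (Fin 2) ℂ)
    (g : Matrix (Fin 3) (Fin 3) ℂ) : Op0 N :=
  op0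
    (fun i i' => (Complex.exp (-((t : ℂ) + (θ : ℂ)) * I) * q i i') • 1)
    (fun j j' => (Complex.exp (-(ξ : ℂ) * I) * q j.1 j'.1 * star (g j.2 j'.2)) • 1)

/-- Entrywise complex conjugation of an operator on `K₀`. -/
def conj0 {N : ℕ} (X : Op0 N) : Op0 N := X.map (starRingEnd ℂ)

/-- The gauge transformation `F(θ,q,g,t,ξ)` on `K_F`. -/
def Fgauge {N : ℕ} (θ : ℝ) (q : Matrix (Fin 2) (Fin 2) ℂ)
    (g : Matrix (Fin 3) (Fin 3) ℂ) (t ξ : ℝ) : OpF N :=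
  mk4 !![Ablk θ t ξ g, 0, 0, 0;
         0, Bblk θ t ξ q g, 0, 0;
         0, 0, conj0 (Ablk θ t ξ g), 0;
         0, 0, 0, conj0 (Bblk θ t ξ q g)]

/-- `SU(2)` as a set of `2×2` complex matrices. -/
def SU2 : Set (Matrix (Fin 2) (Fin 2) ℂ) := {q | qᴴ * q = 1 ∧ q.det = 1}

/-- `SU(3)` as a set of `3×3` complex matrices. -/
def SU3 : Set (Matrix (Fin 3) (Fin 3) ℂ) := {g | gᴴ * g = 1 ∧ g.det = 1}

/-- The unimodular gauge family `S = {F(θ,q,g,0,−θ/3)}`. -/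
def famS (N : ℕ) : Set (OpF N) :=
  {x | ∃ (θ : ℝ) (q : Matrix (Fin 2) (Fin 2) ℂ) (g : Matrix (Fin 3) (Fin 3) ℂ),
    q ∈ SU2 ∧ g ∈ SU3 ∧ x = Fgauge θ q g 0 (-θ / 3)}

/-- The `U(1)_{B−L}` family `T = {F(0,1,1,t,−t/3)}`. -/
def famT (N : ℕ) : Set (OpF N) := {x | ∃ t : ℝ, x = Fgauge 0 1 1 t (-t / 3)}

/-- The `U(1)_X` family `X = {F(0,1,1,0,ξ)}`. -/
def famX (N : ℕ) : Set (OpF N) := {x | ∃ ξ : ℝ, x = Fgauge 0 1 1 0 ξ}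

end

noncomputable section AuxLemmas

variable {N : ℕ}

lemma mk4_mul (B C : Matrix (Fin 4) (Fin 4) (Op0 N)) :
    mk4 B * mk4 C = mk4 (B * C) := by
  ext ⟨a, p⟩ ⟨b, r⟩
  simp [mk4, Matrix.mul_apply, Matrix.sum_apply, Fintype.sum_prod_type,
    Fintype.sum_sum_type]

lemma diag4_mul (a b c d a' b' c' d' : Op0 N) :
    mk4 !![a,0,0,0;0,b,0,0;0,0,c,0;0,0,0,d] *
      mk4 !![a',0,0,0;0,b',0,0;0,0,c',0;0,0,0,d'] =
    mk4 !![a*a',0,0,0;0,b*b',0,0;0,0,c*c',0;0,0,0,d*d'] := by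
  rw [mk4_mul]
  have h : (!![a,0,0,0;0,b,0,0;0,0,c,0;0,0,0,d] :
        Matrix (Fin 4) (Fin 4) (Op0 N)) *
      !![a',0,0,0;0,b',0,0;0,0,c',0;0,0,0,d'] =
      !![a*a',0,0,0;0,b*b',0,0;0,0,c*c',0;0,0,0,d*d'] := by
    refine Matrix.ext fun i j => ?_
    fin_cases i <;> fin_cases j <;>
      simp [Matrix.mul_apply, Fin.sum_univ_four, Matrix.vecHead, Matrix.vecTail]
  rw [h]

lemma op0_mul (fl fl' : Fin 2 → Fin 2 → Matrix (Fin N) (Fin N) ℂ)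
    (fq fq' : Fin 2 × Fin 3 → Fin 2 × Fin 3 → Matrix (Fin N) (Fin N) ℂ) :
    op0 fl fq * op0 fl' fq' =
      op0 (fun i i' => ∑ k, fl i k * fl' k i')
        (fun j j' => ∑ k, fq j k * fq' k j') := by
  ext ⟨s, n⟩ ⟨s', n'⟩
  rcases s with i | j <;> rcases s' with i' | j' <;>
    simp [op0, Matrix.mul_apply, Matrix.sum_apply, Fintype.sum_prod_type,
      Fintype.sum_sum_type]

lemma smul_one_mul_smul_one (a b : ℂ) (X Y : Matrix (Fin N) (Fin N) ℂ) :
    (a • X) * (b • Y) = (a * b) • (X * Y) := by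
  rw [Matrix.smul_mul, Matrix.mul_smul, smul_smul]

lemma sum_star_mul (g g' : Matrix (Fin 3) (Fin 3) ℂ) (a b : Fin 3) :
    ∑ k, star (g a k) * star (g' k b) = star ((g * g') a b) := by
  simp [Matrix.mul_apply, mul_comm]

lemma conj0_mul (X Y : Op0 N) : conj0 X * conj0 Y = conj0 (X * Y) := by
  simp [conj0, Matrix.map_mul]

lemma conj0_one : conj0 (1 : Op0 N) = 1 := by
  simp [conj0]

lemma op0_congr {fl fl' : Fin 2 → Fin 2 → Matrix (Fin N) (Fin N) ℂ}
    {fq fq' : Fin 2 × Fin 3 → Fin 2 × Fin 3 → Matrix (Fin N) (Fin N) ℂ}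
    (h1 : fl = fl') (h2 : fq = fq') : op0 fl fq = op0 fl' fq' := by
  rw [h1, h2]

lemma Ablk_mul (θ t ξ θ' t' ξ' : ℝ) (g g' : Matrix (Fin 3) (Fin 3) ℂ) :
    Ablk (N := N) θ t ξ g * Ablk θ' t' ξ' g'
      = Ablk (θ + θ') (t + t') (ξ + ξ') (g * g') := by
  rw [Ablk, Ablk, Ablk, op0_mul]
  refine op0_congr ?_ ?_
  · funext i i'
    fin_cases i <;> fin_cases i' <;>
      simp [Fin.sum_univ_two, smul_one_mul_smul_one, smul_smul]
    all_goals try congr 1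
    all_goals
      (try push_cast
       ring_nf
       simp only [sub_eq_add_neg, neg_add, mul_add, add_mul, neg_mul, mul_neg,
         neg_neg, _root_.map_add, _root_.map_mul, star_add, star_mul', Complex.exp_add]
       try ring_nf)
  · funext j j'
    obtain ⟨j1, j2⟩ := j; obtain ⟨j1', j2'⟩ := j'
    fin_cases j1 <;> fin_cases j1' <;>
      simp [Fintype.sum_prod_type, Fin.sum_univ_two, smul_one_mul_smul_one,
        smul_smul]
    all_goals try rw [← Finset.sum_smul]
    all_goals try congr 1
    all_goals
      (simp only [Matrix.mul_apply, map_sum, _root_.map_mul, _root_.map_add,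
        Finset.mul_sum, Finset.sum_mul, Fin.sum_univ_three]
       try push_cast
       ring_nf
       simp only [sub_eq_add_neg, neg_add, mul_add, add_mul, neg_mul, mul_neg,
         neg_neg, _root_.map_add, _root_.map_mul, star_add, star_mul', Complex.exp_add]
       try ring_nf)

lemma Bblk_mul (θ t ξ θ' t' ξ' : ℝ) (q q' : Matrix (Fin 2) (Fin 2) ℂ)
    (g g' : Matrix (Fin 3) (Fin 3) ℂ) :
    Bblk (N := N) θ t ξ q g * Bblk θ' t' ξ' q' g'
      = Bblk (θ + θ') (t + t') (ξ + ξ') (q * q') (g * g') := by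
  rw [Bblk, Bblk, Bblk, op0_mul]
  refine op0_congr ?_ ?_
  · funext i i'
    simp only [smul_one_mul_smul_one, mul_one]
    rw [← Finset.sum_smul]
    congr 1
    simp only [Matrix.mul_apply, Fin.sum_univ_two, Finset.mul_sum,
      Finset.sum_mul]
    push_cast
    ring_nf
    simp only [sub_eq_add_neg, neg_add, mul_add, add_mul, neg_mul, mul_neg,
      neg_neg, _root_.map_add, _root_.map_mul, star_add, star_mul', Complex.exp_add]
    try ring_nf
  · funext j j'
    simp only [smul_one_mul_smul_one, mul_one]
    rw [← Finset.sum_smul]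
    congr 1
    simp only [Matrix.mul_apply, map_sum, _root_.map_mul, _root_.map_add,
      star_sum, star_add, star_mul', Fintype.sum_prod_type, Fin.sum_univ_two,
      Fin.sum_univ_three, Finset.mul_sum, Finset.sum_mul]
    push_cast
    ring_nf
    simp only [sub_eq_add_neg, neg_add, mul_add, add_mul, neg_mul, mul_neg,
      neg_neg, _root_.map_add, _root_.map_mul, star_add, star_mul', Complex.exp_add]
    try ring_nf

lemma Ablk_one : Ablk (N := N) 0 0 0 1 = 1 := by
  ext ⟨s, n⟩ ⟨s', n'⟩
  rcases s with i | j <;> rcases s' with i' | j' <;>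
    simp [Ablk, op0, Matrix.one_apply, Prod.ext_iff] <;>
    split_ifs <;> simp_all [Matrix.one_apply]

lemma Bblk_one : Bblk (N := N) 0 0 0 1 1 = 1 := by
  ext ⟨s, n⟩ ⟨s', n'⟩
  rcases s with i | j <;> rcases s' with i' | j' <;>
    simp [Bblk, op0, Matrix.one_apply, Prod.ext_iff] <;>
    split_ifs <;> simp_all [Matrix.one_apply]

lemma Fgauge_one : Fgauge (N := N) 0 1 1 0 0 = 1 := by
  rw [Fgauge, Ablk_one, Bblk_one, conj0_one]
  ext ⟨a, p⟩ ⟨b, r⟩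
  fin_cases a <;> fin_cases b <;>
    simp [mk4, Matrix.one_apply, Prod.ext_iff, Matrix.vecHead, Matrix.vecTail]

lemma Fgauge_mul (θ t ξ θ' t' ξ' : ℝ) (q q' : Matrix (Fin 2) (Fin 2) ℂ)
    (g g' : Matrix (Fin 3) (Fin 3) ℂ) :
    Fgauge (N := N) (θ + θ') (q * q') (g * g') (t + t') (ξ + ξ')
      = Fgauge θ q g t ξ * Fgauge θ' q' g' t' ξ' := by
  rw [Fgauge, Fgauge, Fgauge, diag4_mul, Ablk_mul, Bblk_mul,
    conj0_mul, conj0_mul, Ablk_mul, Bblk_mul]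

lemma Fgauge_congr {θ θ' t t' ξ ξ' : ℝ} {q q' : Matrix (Fin 2) (Fin 2) ℂ}
    {g g' : Matrix (Fin 3) (Fin 3) ℂ} (h1 : θ = θ') (h2 : q = q') (h3 : g = g')
    (h4 : t = t') (h5 : ξ = ξ') :
    Fgauge (N := N) θ q g t ξ = Fgauge θ' q' g' t' ξ' := by
  rw [h1, h2, h3, h4, h5]

lemma unitary_mul {n : ℕ} {a b : Matrix (Fin n) (Fin n) ℂ}
    (ha : aᴴ * a = 1 ∧ a.det = 1) (hb : bᴴ * b = 1 ∧ b.det = 1) :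
    (a * b)ᴴ * (a * b) = 1 ∧ (a * b).det = 1 := by
  constructor
  · rw [Matrix.conjTranspose_mul, Matrix.mul_assoc, ← Matrix.mul_assoc aᴴ,
      ha.1, Matrix.one_mul, hb.1]
  · rw [Matrix.det_mul, ha.2, hb.2, one_mul]

lemma unitary_star {n : ℕ} {a : Matrix (Fin n) (Fin n) ℂ}
    (ha : aᴴ * a = 1 ∧ a.det = 1) :
    (aᴴ)ᴴ * aᴴ = 1 ∧ (aᴴ).det = 1 := by
  constructor
  · rw [Matrix.conjTranspose_conjTranspose]
    exact mul_eq_one_comm.mp ha.1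
  · rw [Matrix.det_conjTranspose, ha.2, star_one]

lemma one_mem_SU {n : ℕ} : (1 : Matrix (Fin n) (Fin n) ℂ)ᴴ * 1 = 1 ∧
    (1 : Matrix (Fin n) (Fin n) ℂ).det = 1 := by simp

end AuxLemmas

/-- `F` is a group homomorphism from `ℝ × SU(2) × SU(3) × ℝ × ℝ` to
`GL(K_F)`; the families `S`, `T`, `X` are mutually commuting subgroups; and every
`F(θ,q,g,t,ξ)` factors as
`F(θ,q,g,0,−θ/3)·F(0,1,1,t,−t/3)·F(0,1,1,0,ξ+(θ+t)/3)`. -/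
theorem stmt9 (N : ℕ) :
    (∀ (θ θ' t t' ξ ξ' : ℝ) (q q' : Matrix (Fin 2) (Fin 2) ℂ)
        (g g' : Matrix (Fin 3) (Fin 3) ℂ),
      q ∈ SU2 → q' ∈ SU2 → g ∈ SU3 → g' ∈ SU3 →
      Fgauge (N := N) (θ + θ') (q * q') (g * g') (t + t') (ξ + ξ')
        = Fgauge θ q g t ξ * Fgauge θ' q' g' t' ξ') ∧
    Fgauge (N := N) 0 1 1 0 0 = 1 ∧
    (∀ (θ t ξ : ℝ) (q : Matrix (Fin 2) (Fin 2) ℂ) (g : Matrix (Fin 3) (Fin 3) ℂ),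
      q ∈ SU2 → g ∈ SU3 → IsUnit (Fgauge (N := N) θ q g t ξ)) ∧
    (∀ fam ∈ ({famS N, famT N, famX N} : Set (Set (OpF N))),
      (1 : OpF N) ∈ fam ∧
      (∀ x ∈ fam, ∀ y ∈ fam, x * y ∈ fam) ∧
      (∀ x ∈ fam, ∃ y ∈ fam, x * y = 1 ∧ y * x = 1)) ∧
    (∀ x ∈ famS N, ∀ y ∈ famT N, x * y = y * x) ∧
    (∀ x ∈ famS N, ∀ y ∈ famX N, x * y = y * x) ∧
    (∀ x ∈ famT N, ∀ y ∈ famX N, x * y = y * x) ∧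
    (∀ (θ t ξ : ℝ) (q : Matrix (Fin 2) (Fin 2) ℂ) (g : Matrix (Fin 3) (Fin 3) ℂ),
      q ∈ SU2 → g ∈ SU3 →
      Fgauge (N := N) θ q g t ξ
        = Fgauge θ q g 0 (-θ / 3) * Fgauge 0 1 1 t (-t / 3)
            * Fgauge 0 1 1 0 (ξ + (θ + t) / 3)) := by
  refine ⟨fun θ θ' t t' ξ ξ' q q' g g' _ _ _ _ =>
      Fgauge_mul θ t ξ θ' t' ξ' q q' g g',
    Fgauge_one, ?_, ?_, ?_, ?_, ?_, ?_⟩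
  · -- units
    intro θ t ξ q g hq hg
    have h1 : q * qᴴ = 1 := mul_eq_one_comm.mp hq.1
    have h2 : g * gᴴ = 1 := mul_eq_one_comm.mp hg.1
    refine isUnit_iff_exists.mpr ⟨Fgauge (-θ) qᴴ gᴴ (-t) (-ξ), ?_, ?_⟩
    · rw [← Fgauge_mul]
      exact (Fgauge_congr (by ring) h1 h2 (by ring) (by ring)).trans Fgauge_one
    · rw [← Fgauge_mul]
      exact (Fgauge_congr (by ring) hq.1 hg.1 (by ring) (by ring)).trans
        Fgauge_one
  · -- subgroups
    intro fam hfam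
    simp only [Set.mem_insert_iff, Set.mem_singleton_iff] at hfam
    rcases hfam with rfl | rfl | rfl
    · refine ⟨⟨0, 1, 1, one_mem_SU, one_mem_SU,
        ((Fgauge_congr rfl rfl rfl rfl (by norm_num)).trans Fgauge_one).symm⟩,
        ?_, ?_⟩
      · rintro x ⟨θ, q, g, hq, hg, rfl⟩ y ⟨θ', q', g', hq', hg', rfl⟩
        refine ⟨θ + θ', q * q', g * g', unitary_mul hq hq',
          unitary_mul hg hg', ?_⟩
        rw [← Fgauge_mul]
        exact Fgauge_congr rfl rfl rfl (by ring) (by ring)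
      · rintro x ⟨θ, q, g, hq, hg, rfl⟩
        refine ⟨Fgauge (-θ) qᴴ gᴴ 0 (- -θ / 3),
          ⟨-θ, qᴴ, gᴴ, unitary_star hq, unitary_star hg, rfl⟩, ?_, ?_⟩
        · rw [← Fgauge_mul]
          exact (Fgauge_congr (by ring) (mul_eq_one_comm.mp hq.1)
            (mul_eq_one_comm.mp hg.1) (by ring) (by ring)).trans
            Fgauge_one
        · rw [← Fgauge_mul]
          exact (Fgauge_congr (by ring) hq.1 hg.1 (by ring) (by ring)).trans
            Fgauge_one
    · refine ⟨⟨0,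
        ((Fgauge_congr rfl rfl rfl rfl (by norm_num)).trans Fgauge_one).symm⟩,
        ?_, ?_⟩
      · rintro x ⟨t, rfl⟩ y ⟨t', rfl⟩
        refine ⟨t + t', ?_⟩
        rw [← Fgauge_mul]
        exact Fgauge_congr (by ring) (by simp) (by simp) rfl (by ring)
      · rintro x ⟨t, rfl⟩
        refine ⟨Fgauge 0 1 1 (-t) (- -t / 3), ⟨-t, rfl⟩, ?_, ?_⟩ <;>
        · rw [← Fgauge_mul]
          exact (Fgauge_congr (by ring) (by simp) (by simp) (by ring)
            (by ring)).trans Fgauge_one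
    · refine ⟨⟨0, Fgauge_one.symm⟩, ?_, ?_⟩
      · rintro x ⟨ξ, rfl⟩ y ⟨ξ', rfl⟩
        refine ⟨ξ + ξ', ?_⟩
        rw [← Fgauge_mul]
        exact Fgauge_congr (by ring) (by simp) (by simp) (by ring) rfl
      · rintro x ⟨ξ, rfl⟩
        refine ⟨Fgauge 0 1 1 0 (-ξ), ⟨-ξ, rfl⟩, ?_, ?_⟩ <;>
        · rw [← Fgauge_mul]
          exact (Fgauge_congr (by ring) (by simp) (by simp) (by ring)
            (by ring)).trans Fgauge_one
  · rintro x ⟨θ, q, g, hq, hg, rfl⟩ y ⟨t, rfl⟩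
    rw [← Fgauge_mul, ← Fgauge_mul]
    exact Fgauge_congr (by ring) (by simp) (by simp) (by ring) (by ring)
  · rintro x ⟨θ, q, g, hq, hg, rfl⟩ y ⟨ξ, rfl⟩
    rw [← Fgauge_mul, ← Fgauge_mul]
    exact Fgauge_congr (by ring) (by simp) (by simp) (by ring) (by ring)
  · rintro x ⟨t, rfl⟩ y ⟨ξ, rfl⟩
    rw [← Fgauge_mul, ← Fgauge_mul]
    exact Fgauge_congr (by ring) (by simp) (by simp) (by ring) (by ring)
  · intro θ t ξ q g hq hg
    rw [← Fgauge_mul, ← Fgauge_mul]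
    exact Fgauge_congr (by ring) (by simp) (by simp) (by ring) (by ring)
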